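/- arXiv:1812.09015 — 2 statements merged into one kernel-verified Lean document; each statement's English description precedes it below -/
import Mathlib

section
/- On a compact Riemannian manifold M without boundary, if w is a Killing vector field and u, v are divergence-free vector fields, then ∫_M (g(∇_v u, w) + g(∇_u v, w)) ω_M = 0. -/
/-- An abstract axiomatization of the basic differential-geometric operators on a
compact Riemannian manifold `M` without boundary.  Here `F` plays the role of the
commutative `ℝ`-algebra `C^∞(M)` of smooth functions and `V` plays the role of
the `C^∞(M)`-module `𝔛(M)` of smooth vector fields on `M`. -/
structure RiemannianVectorCalculus (F V : Type*) [CommRing F] [Algebra ℝ F]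
    [AddCommGroup V] [Module F V] [Module ℝ V] [IsScalarTower ℝ F V] where
  /-- the Riemannian metric `g(u,v)` -/
  g : V → V → F
  /-- the Levi-Civita covariant derivative `∇_x y` -/
  conn : V → V → V
  /-- the divergence `div u = tr(∇u)` of a vector field -/
  div : V → F
  /-- the gradient of a function, `grad p = g^{ij} p_{;j}` -/
  grad : F → V
  /-- integration `∫_M · ω_M` against the Riemannian volume form -/
  integ : F →ₗ[ℝ] ℝ
  /-- the divergence of a `(1,1)`-tensor field (viewed as a map `V → V`) -/
  divT : (V → V) → V
  /-- the fiberwise inner product `g(T,B) = tr(T B^*)` of `(1,1)`-tensor fields -/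
  gT : (V → V) → (V → V) → F
  /-- the Ricci operator `u ↦ Ri(u)` -/
  Ric : V → V
  /-- the Ricci tensor `Ri(u,v)` -/
  ric2 : V → V → F
  /-- the function `tr((∇u)²) = u^k_{;i} u^i_{;k}` -/
  trSq : V → F
  /-- the deformation tensor `S_u = ∇u + (∇u)^T`, as the map `X ↦ S_u X` -/
  S : V → V → V
  /-- the antisymmetric tensor `A_u = ∇u − (∇u)^T`, as the map `X ↦ A_u X` -/
  A : V → V → V
  /-- symmetry of the metric -/
  g_symm : ∀ u v, g u v = g v u
  /-- additivity of the metric -/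
  g_add_left : ∀ u v w, g (u + v) w = g u w + g v w
  /-- `F`-bilinearity of the metric -/
  g_smul_left : ∀ (f : F) (u v : V), g (f • u) v = f * g u v
  /-- characterization of the deformation tensor `S_u` via the metric -/
  g_S : ∀ u X Y, g (S u X) Y = g (conn X u) Y + g (conn Y u) X
  /-- characterization of the antisymmetric part `A_u` via the metric -/
  g_A : ∀ u X Y, g (A u X) Y = g (conn X u) Y - g (conn Y u) X
  /-- metric compatibility of the Levi-Civita connection:
  `∇_v g(u,w) = g(∇_v u, w) + g(∇_v w, u)` -/
  compat : ∀ u w v, g (grad (g u w)) v = g (conn v u) w + g (conn v w) u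
  /-- the product rule `div(f v) = f div(v) + g(grad f, v)` -/
  div_smul : ∀ (f : F) (v : V), div (f • v) = f * div v + g (grad f) v
  /-- the divergence theorem: on the compact manifold `M` without boundary,
  `∫_M div(v) ω_M = 0` -/
  integ_div : ∀ v, integ (div v) = 0
  /-- `Ri(u,v) = g(Ri(u),v)` -/
  ric2_eq : ∀ u v, ric2 u v = g (Ric u) v

namespace RiemannianVectorCalculus

variable {F V : Type*} [CommRing F] [Algebra ℝ F] [AddCommGroup V] [Module F V]
  [Module ℝ V] [IsScalarTower ℝ F V] (D : RiemannianVectorCalculus F V)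

/-- the Bochner Laplacian `Δ_B u = div(∇u) = g^{ij} u^k_{;ij}` -/
def deltaB (u : V) : V := D.divT (fun x => D.conn x u)

/-- the diffusion operator `L u = div(S_u)` -/
def L (u : V) : V := D.divT (D.S u)

/-- the Hodge Laplacian on vector fields, `Δ_H u = −♯(δd + dδ)♭u = div(A_u) + grad(div u)` -/
def deltaH (u : V) : V := D.divT (D.A u) + D.grad (D.div u)

/-- the fiberwise inner product `g(S_u, S_v)` of deformation tensors -/
def gS (u v : V) : F := D.gT (D.S u) (D.S v)

/-- the fiberwise inner product `g(A_u, A_v)` -/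
def gA (u v : V) : F := D.gT (D.A u) (D.A v)

/-- the fiberwise inner product `g(∇u, ∇v)` of full covariant derivatives -/
def gGrad (u v : V) : F := D.gT (fun x => D.conn x u) (fun x => D.conn x v)

/-- the scalar Laplacian `Δ f = div(grad f)` -/
def lap (f : F) : F := D.div (D.grad f)

/-- the Lie bracket `[u,v] = ∇_u v − ∇_v u` (torsion-freeness of `∇`) -/
def bracket (u v : V) : V := D.conn u v - D.conn v u

/-- `u` is a Killing vector field: `g(∇_X u, Y) + g(∇_Y u, X) = 0` for all `X`, `Y`
(equivalently `S_u = 0`). -/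
def IsKilling (u : V) : Prop := ∀ X Y, D.g (D.conn X u) Y + D.g (D.conn Y u) X = 0

/-- `u` is a harmonic vector field: `♭u` is closed and coclosed; equivalently
`g(∇_X u, Y) − g(∇_Y u, X) = 0` for all `X`, `Y` (i.e. `A_u = 0`) and `div u = 0`. -/
def IsHarmonic (u : V) : Prop :=
  (∀ X Y, D.g (D.conn X u) Y = D.g (D.conn Y u) X) ∧ D.div u = 0

end RiemannianVectorCalculus

/-! For divergence-free `v`, `g(∇_v u, w) + g(∇_v w, u) = v(g(u, w)) = div(g(u, w) v)` integrates to
zero. Adding this identity to its copy with `u` and `v` exchanged leaves the integral of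
`g(∇_v w, u) + g(∇_u w, v)`, which vanishes pointwise because `w` is Killing. -/

namespace RiemannianVectorCalculus

variable {F V : Type*} [CommRing F] [Algebra ℝ F] [AddCommGroup V] [Module F V]
  [Module ℝ V] [IsScalarTower ℝ F V] (D : RiemannianVectorCalculus F V)

theorem div_g_smul_of_div_eq_zero {v : V} (hv : D.div v = 0) (u w : V) :
    D.div (D.g u w • v) = D.g (D.conn v u) w + D.g (D.conn v w) u := by
  rw [D.div_smul, hv, mul_zero, zero_add, D.compat]

theorem integ_g_conn_add_g_conn_eq_zero {v : V} (hv : D.div v = 0) (u w : V) :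
    D.integ (D.g (D.conn v u) w + D.g (D.conn v w) u) = 0 := by
  rw [← D.div_g_smul_of_div_eq_zero hv, D.integ_div]

end RiemannianVectorCalculus

open RiemannianVectorCalculus in
/-- If `w` is Killing and `u, v` are divergence-free on a compact
Riemannian manifold without boundary, then `∫_M (g(∇_v u, w) + g(∇_u v, w)) ω_M = 0`. -/
theorem integral_killing_pairing_zero
    {F V : Type*} [CommRing F] [Algebra ℝ F] [AddCommGroup V] [Module F V]
    [Module ℝ V] [IsScalarTower ℝ F V]
    (D : RiemannianVectorCalculus F V) (u v w : V)
    (hw : D.IsKilling w) (hu : D.div u = 0) (hv : D.div v = 0) :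
    D.integ (D.g (D.conn v u) w + D.g (D.conn u v) w) = 0 := by
  have hsplit : D.g (D.conn v u) w + D.g (D.conn u v) w
      = (D.g (D.conn v u) w + D.g (D.conn v w) u) + (D.g (D.conn u v) w + D.g (D.conn u w) v)
        - (D.g (D.conn v w) u + D.g (D.conn u w) v) := by ring
  rw [hsplit, hw v u, sub_zero, map_add, D.integ_g_conn_add_g_conn_eq_zero hv,
    D.integ_g_conn_add_g_conn_eq_zero hu, add_zero]
end

section
/- On a compact Riemannian manifold M without boundary, if w is a harmonic vector field (i.e., ♭w is closed and coclosed) and u, v are divergence-free vector fields, then ∫_M (g(∇_v u, w) − g(∇_u v, w)) ω_M = 0. -/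
namespace RiemannianVectorCalculus

variable {F V : Type*} [CommRing F] [Algebra ℝ F] [AddCommGroup V] [Module F V]
  [Module ℝ V] [IsScalarTower ℝ F V] (D : RiemannianVectorCalculus F V)

theorem div_smul_of_div_eq_zero {v : V} (hv : D.div v = 0) (f : F) :
    D.div (f • v) = D.g (D.grad f) v := by
  rw [D.div_smul, hv, mul_zero, zero_add]

theorem g_conn_sub_eq_div_sub {u v w : V} (hu : D.div u = 0) (hv : D.div v = 0)
    (hw : ∀ X Y, D.g (D.conn X w) Y = D.g (D.conn Y w) X) :
    D.g (D.conn v u) w - D.g (D.conn u v) w = D.div (D.g u w • v) - D.div (D.g v w • u) := by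
  rw [D.div_g_smul_of_div_eq_zero hv, D.div_g_smul_of_div_eq_zero hu, hw v u]
  ring

end RiemannianVectorCalculus

open RiemannianVectorCalculus in
/-- If `w` is harmonic (`♭w` closed and coclosed) and `u, v` are
divergence-free on a compact Riemannian manifold without boundary, then
`∫_M (g(∇_v u, w) − g(∇_u v, w)) ω_M = 0`. -/
theorem integral_harmonic_pairing_zero
    {F V : Type*} [CommRing F] [Algebra ℝ F] [AddCommGroup V] [Module F V]
    [Module ℝ V] [IsScalarTower ℝ F V]
    (D : RiemannianVectorCalculus F V) (u v w : V)
    (hw : D.IsHarmonic w) (hu : D.div u = 0) (hv : D.div v = 0) :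
    D.integ (D.g (D.conn v u) w - D.g (D.conn u v) w) = 0 := by
  rw [D.g_conn_sub_eq_div_sub hu hv hw.1, map_sub, D.integ_div, D.integ_div, sub_zero]
end
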